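/- arXiv:2103.10870 — 6 statements merged into one kernel-verified Lean document; each statement's English description precedes it below -/
import Mathlib

section
/- Let κ, λ, x₁, x₂ ∈ ℂ and let (aₙ)_{n∈ℕ₀}, (bₙ)_{n∈ℕ₀} be sequences in ℂ satisfying for all n ∈ ℕ₀ that aₙ = bₙ + Σ_{k=0}^{n−1} [κ aₖ + 𝟙_ℕ(k) λ a_{|k−1|}], and assume that x₁ and x₂ satisfy xᵢ² = (1+κ) xᵢ + λ for i ∈ {1,2} and x₁ ≠ x₂. Then for all n ∈ ℕ₀ it holds that aₙ = Σ_{k=0}^{n} [(b_k − 𝟙_ℕ(k) b_{|k−1|})/(x₂ − x₁)] · (x₂^{n−k+1} − x₁^{n−k+1}). -/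
/-- Lemma 2.2 (Discrete Gronwall-type recursion). -/
theorem gronwall_type_recursion (κ lam x₁ x₂ : ℂ) (a b : ℕ → ℂ)
    (hrec : ∀ n : ℕ, a n = b n + ∑ k ∈ Finset.range n,
      (κ * a k + (if 1 ≤ k then lam * a (k - 1) else 0)))
    (hx₁ : x₁ ^ 2 = (1 + κ) * x₁ + lam) (hx₂ : x₂ ^ 2 = (1 + κ) * x₂ + lam)
    (hne : x₁ ≠ x₂) :
    ∀ n : ℕ, a n = ∑ k ∈ Finset.range (n + 1),
      ((b k - (if 1 ≤ k then b (k - 1) else 0)) / (x₂ - x₁)) *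
        (x₂ ^ (n - k + 1) - x₁ ^ (n - k + 1)) := by
  have hxne : x₂ - x₁ ≠ 0 := sub_ne_zero.mpr fun h => hne h.symm
  have hsum : x₂ + x₁ = 1 + κ := by
    have h : (x₂ + x₁ - (1 + κ)) * (x₂ - x₁) = 0 := by linear_combination hx₂ - hx₁
    rcases mul_eq_zero.mp h with h | h
    · exact sub_eq_zero.mp h
    · exact absurd h hxne
  have e2 : x₂ ^ 2 - x₁ ^ 2 = (1 + κ) * (x₂ - x₁) := by
    linear_combination (x₂ - x₁) * hsum
  have hpow : ∀ m : ℕ, x₂ ^ (m + 3) - x₁ ^ (m + 3) =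
      (1 + κ) * (x₂ ^ (m + 2) - x₁ ^ (m + 2)) + lam * (x₂ ^ (m + 1) - x₁ ^ (m + 1)) := by
    intro m
    linear_combination x₂ ^ (m + 1) * hx₂ - x₁ ^ (m + 1) * hx₁
  have ha0 : a 0 = b 0 := by simpa using hrec 0
  have ha1 : a 1 = b 1 + κ * a 0 := by
    have h := hrec 1
    simpa using h
  have arec : ∀ n : ℕ, a (n + 2) = (1 + κ) * a (n + 1) + lam * a n + (b (n + 2) - b (n + 1)) := by
    intro n
    have h2 := hrec (n + 2)
    have h1 := hrec (n + 1)
    rw [Finset.sum_range_succ] at h2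
    rw [if_pos (Nat.le_add_left 1 n)] at h2
    simp only [Nat.add_sub_cancel] at h2
    linear_combination h2 - h1
  have hA : ∀ m : ℕ,
      (∑ k ∈ Finset.range (m + 1), ((b k - (if 1 ≤ k then b (k - 1) else 0)) / (x₂ - x₁)) *
        (x₂ ^ (m + 2 - k + 1) - x₁ ^ (m + 2 - k + 1)))
      = (1 + κ) * (∑ k ∈ Finset.range (m + 1),
          ((b k - (if 1 ≤ k then b (k - 1) else 0)) / (x₂ - x₁)) *
            (x₂ ^ (m + 1 - k + 1) - x₁ ^ (m + 1 - k + 1)))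
        + lam * (∑ k ∈ Finset.range (m + 1),
          ((b k - (if 1 ≤ k then b (k - 1) else 0)) / (x₂ - x₁)) *
            (x₂ ^ (m - k + 1) - x₁ ^ (m - k + 1))) := by
    intro m
    rw [Finset.mul_sum, Finset.mul_sum, ← Finset.sum_add_distrib]
    refine Finset.sum_congr rfl fun k hk => ?_
    have hk' : k ≤ m := Nat.lt_succ_iff.mp (Finset.mem_range.mp hk)
    have e3 : m + 2 - k + 1 = (m - k) + 3 := by omega
    have e2' : m + 1 - k + 1 = (m - k) + 2 := by omega
    have e1 : m - k + 1 = (m - k) + 1 := rfl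
    rw [e3, e2', e1, hpow (m - k)]
    ring
  have key : ∀ m : ℕ,
      (∑ k ∈ Finset.range (m + 2 + 1), ((b k - (if 1 ≤ k then b (k - 1) else 0)) / (x₂ - x₁)) *
        (x₂ ^ (m + 2 - k + 1) - x₁ ^ (m + 2 - k + 1)))
      = (1 + κ) * (∑ k ∈ Finset.range (m + 1 + 1),
          ((b k - (if 1 ≤ k then b (k - 1) else 0)) / (x₂ - x₁)) *
            (x₂ ^ (m + 1 - k + 1) - x₁ ^ (m + 1 - k + 1)))
        + lam * (∑ k ∈ Finset.range (m + 1),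
          ((b k - (if 1 ≤ k then b (k - 1) else 0)) / (x₂ - x₁)) *
            (x₂ ^ (m - k + 1) - x₁ ^ (m - k + 1)))
        + (b (m + 2) - b (m + 1)) := by
    intro m
    rw [show m + 2 + 1 = (m + 2) + 1 from rfl, Finset.sum_range_succ, Finset.sum_range_succ,
      Finset.sum_range_succ (n := m + 1)]
    rw [if_pos (Nat.le_add_left 1 (m + 1)), if_pos (Nat.le_add_left 1 m)]
    rw [show m + 2 - 1 = m + 1 from by omega, show m + 1 - 1 = m from by omega]
    have c1 : m + 2 - (m + 1) + 1 = 2 := by omega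
    have c2 : m + 2 - (m + 2) + 1 = 1 := by omega
    have c3 : m + 1 - (m + 1) + 1 = 1 := by omega
    rw [c1, c2, c3, hA m]
    have hdiv : ((b (m + 2) - b (m + 1)) / (x₂ - x₁)) * (x₂ - x₁) = b (m + 2) - b (m + 1) :=
      div_mul_cancel₀ _ hxne
    simp only [pow_one]
    linear_combination ((b (m + 1) - b m) / (x₂ - x₁)) * e2 + hdiv
  intro n
  induction n using Nat.twoStepInduction with
  | zero =>
    simp only [Finset.sum_range_one, ha0]
    norm_num
    field_simp
  | one =>
    rw [Finset.sum_range_succ, Finset.sum_range_one, ha1, ha0]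
    norm_num
    field_simp
    linear_combination (-b 0) * e2
  | more n ih1 ih2 =>
    rw [arec n, ih1, ih2]
    exact (key n).symm
end

section
/- Let κ, λ ∈ ℂ, let (aₙ)_{n∈ℕ₀}, (bₙ)_{n∈ℕ₀} be sequences in ℂ satisfying for all n ∈ ℕ₀ that aₙ = bₙ + Σ_{k=0}^{n−1} [κ aₖ + 𝟙_ℕ(k) λ a_{|k−1|}], and let (zₙ)_{n∈ℕ₀} be defined by zₙ = Σ_{k=0}^{n} aₖ. Then z₀ = b₀, z₁ = b₁ + (1+κ) b₀, and for all n ∈ ℕ₀ it holds that z_{n+2} = b_{n+2} + (1+κ) z_{n+1} + λ zₙ. -/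
/-- The partial sums of a sequence satisfying the one-step Gronwall-type recursion
satisfy a linear recursion of second order. -/
theorem partial_sums_two_step (κ lam : ℂ) (a b z : ℕ → ℂ)
    (hrec : ∀ n : ℕ, a n = b n + ∑ k ∈ Finset.range n,
      (κ * a k + (if 1 ≤ k then lam * a (k - 1) else 0)))
    (hz : ∀ n : ℕ, z n = ∑ k ∈ Finset.range (n + 1), a k) :
    z 0 = b 0 ∧ z 1 = b 1 + (1 + κ) * b 0 ∧
      ∀ n : ℕ, z (n + 2) = b (n + 2) + (1 + κ) * z (n + 1) + lam * z n := by
  have ha0 : a 0 = b 0 := by simpa using hrec 0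
  have ha1 : a 1 = b 1 + κ * b 0 := by
    have := hrec 1
    simp [Finset.sum_range_succ, ha0] at this
    simpa using this
  refine ⟨by simp [hz 0, ha0], by simp [hz 1, Finset.sum_range_succ, ha0, ha1]; ring, ?_⟩
  intro n
  have key : ∑ k ∈ Finset.range (n + 2),
      (κ * a k + (if 1 ≤ k then lam * a (k - 1) else 0))
      = κ * z (n + 1) + lam * z n := by
    rw [Finset.sum_add_distrib, ← Finset.mul_sum, ← hz (n + 1),
      Finset.sum_range_succ' (fun k => if 1 ≤ k then lam * a (k - 1) else 0) (n + 1)]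
    simp [← Finset.mul_sum, ← hz n]
  have hstep : z (n + 2) = z (n + 1) + a (n + 2) := by
    rw [hz (n + 2), hz (n + 1), Finset.sum_range_succ]
  rw [hstep, hrec (n + 2), key]
  ring
end

section
/- Let (aₙ)_{n∈ℕ₀} be a sequence in [0,∞) and let κ, λ, c₁, c₂, c₃, c₄, β ∈ [0,∞) satisfy for all n ∈ ℕ₀ that aₙ ≤ c₁ + c₂ n + c₃ Σ_{k=1}^{n} c₄^k + Σ_{k=0}^{n−1} [κ aₖ + λ 𝟙_ℕ(k) a_{|k−1|}] and β = ((1+κ) + √((1+κ)² + 4λ))/2 > 1. Then for all n ∈ ℕ₀ it holds that: if c₄ = β, then aₙ ≤ (3/2) βⁿ c₁ + (3 c₂ (βⁿ − 1))/(2(β − 1)) + (3/2) c₃ n βⁿ; and if c₄ ≠ β, then aₙ ≤ (3/2) βⁿ c₁ + (3 c₂ (βⁿ − 1))/(2(β − 1)) + (3 c₃ (c₄^{n+1} − c₄ βⁿ))/(2(c₄ − β)). -/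
set_option maxHeartbeats 1000000

noncomputable def gwU (c₁ c₂ c₃ c₄ β : ℝ) : ℕ → ℝ
  | 0 => c₁
  | (n+1) => β * gwU c₁ c₂ c₃ c₄ β n + c₂ + c₃ * c₄ ^ (n+1)

lemma gwU_nonneg (c₁ c₂ c₃ c₄ β : ℝ) (hc₁ : 0 ≤ c₁) (hc₂ : 0 ≤ c₂) (hc₃ : 0 ≤ c₃)
    (hc₄ : 0 ≤ c₄) (hβ : 0 ≤ β) : ∀ n, 0 ≤ gwU c₁ c₂ c₃ c₄ β n
  | 0 => hc₁
  | (n+1) => by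
    have := gwU_nonneg c₁ c₂ c₃ c₄ β hc₁ hc₂ hc₃ hc₄ hβ n
    have h1 : 0 ≤ c₄ ^ (n+1) := pow_nonneg hc₄ _
    simp only [gwU]
    positivity

lemma gwU_step (c₁ c₂ c₃ c₄ β : ℝ) (n : ℕ) :
    gwU c₁ c₂ c₃ c₄ β (n+1) = β * gwU c₁ c₂ c₃ c₄ β n + c₂ + c₃ * c₄ ^ (n+1) := rfl

/-- Corollary 2.3 (Discrete Gronwall-type inequality). -/
theorem gronwall_type_inequality (a : ℕ → ℝ) (κ lam c₁ c₂ c₃ c₄ β : ℝ)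
    (ha : ∀ n, 0 ≤ a n)
    (hκ : 0 ≤ κ) (hlam : 0 ≤ lam) (hc₁ : 0 ≤ c₁) (hc₂ : 0 ≤ c₂) (hc₃ : 0 ≤ c₃)
    (hc₄ : 0 ≤ c₄)
    (hrec : ∀ n : ℕ, a n ≤ c₁ + c₂ * n + c₃ * ∑ k ∈ Finset.Icc 1 n, c₄ ^ k +
      ∑ k ∈ Finset.range n, (κ * a k + lam * (if 1 ≤ k then a (k - 1) else 0)))
    (hβ : β = ((1 + κ) + Real.sqrt ((1 + κ) ^ 2 + 4 * lam)) / 2)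
    (hβ1 : 1 < β) :
    ∀ n : ℕ,
      (c₄ = β →
        a n ≤ 3 / 2 * β ^ n * c₁ + 3 * c₂ * (β ^ n - 1) / (2 * (β - 1)) +
          3 / 2 * c₃ * n * β ^ n) ∧
      (c₄ ≠ β →
        a n ≤ 3 / 2 * β ^ n * c₁ + 3 * c₂ * (β ^ n - 1) / (2 * (β - 1)) +
          3 * c₃ * (c₄ ^ (n + 1) - c₄ * β ^ n) / (2 * (c₄ - β))) := by
  set u : ℕ → ℝ := gwU c₁ c₂ c₃ c₄ β with hu
  have hβ0 : (0:ℝ) ≤ β := by linarith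
  have hunn : ∀ n, 0 ≤ u n := gwU_nonneg c₁ c₂ c₃ c₄ β hc₁ hc₂ hc₃ hc₄ hβ0
  -- sqrt facts
  have harg : (0:ℝ) ≤ (1 + κ) ^ 2 + 4 * lam := by positivity
  have hsq : Real.sqrt ((1 + κ) ^ 2 + 4 * lam) = 2 * β - (1 + κ) := by
    rw [hβ]; ring
  have hβ2 : β ^ 2 = (1 + κ) * β + lam := by
    have h := Real.sq_sqrt harg
    rw [hsq] at h
    nlinarith [h]
  have hκβ : 1 + κ ≤ β := by
    have h1 : (1 + κ) ≤ Real.sqrt ((1 + κ) ^ 2 + 4 * lam) := by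
      have h2 : Real.sqrt ((1+κ)^2) ≤ Real.sqrt ((1 + κ) ^ 2 + 4 * lam) :=
        Real.sqrt_le_sqrt (by linarith)
      rwa [Real.sqrt_sq (by linarith : (0:ℝ) ≤ 1 + κ)] at h2
    rw [hβ]; linarith
  -- b n
  set b : ℕ → ℝ := fun n => c₁ + c₂ * n + c₃ * ∑ k ∈ Finset.Icc 1 n, c₄ ^ k with hb
  have hbnn : ∀ n, 0 ≤ b n := by
    intro n
    have : 0 ≤ ∑ k ∈ Finset.Icc 1 n, c₄ ^ k :=
      Finset.sum_nonneg fun k _ => pow_nonneg hc₄ _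
    have : 0 ≤ c₃ * ∑ k ∈ Finset.Icc 1 n, c₄ ^ k := mul_nonneg hc₃ this
    have hn : (0:ℝ) ≤ (n:ℝ) := Nat.cast_nonneg n
    simp only [hb]
    nlinarith [mul_nonneg hc₂ hn]
  have hbstep : ∀ n : ℕ, b (n+1) = b n + c₂ + c₃ * c₄ ^ (n+1) := by
    intro n
    simp only [hb]
    rw [Finset.sum_Icc_succ_top (by omega : 1 ≤ n+1)]
    push_cast; ring
  -- step inequality
  have hstepu : ∀ n : ℕ, u (n+1) ≥ β * u n := by
    intro n
    have : 0 ≤ c₃ * c₄ ^ (n+1) := mul_nonneg hc₃ (pow_nonneg hc₄ _)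
    rw [hu, gwU_step]; linarith
  have hkey : ∀ n : ℕ, κ * u n + lam * (if 1 ≤ n then u (n-1) else 0) ≤ (β - 1) * u n := by
    intro n
    match n with
    | 0 =>
      simp only [if_neg (by omega : ¬ 1 ≤ 0)]
      have := hunn 0
      nlinarith
    | (m+1) =>
      simp only [if_pos (by omega : 1 ≤ m+1), Nat.add_sub_cancel]
      have h1 := hstepu m
      have h2 := hunn m
      have h3 : β - 1 - κ ≥ 0 := by linarith
      have h4 : (β - 1 - κ) * u (m+1) ≥ (β - 1 - κ) * (β * u m) :=
        mul_le_mul_of_nonneg_left h1 h3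
      have h5 : (β - 1 - κ) * β = lam := by nlinarith
      nlinarith
  -- Lemma A
  have hA : ∀ n : ℕ,
      (∑ k ∈ Finset.range n, (κ * u k + lam * (if 1 ≤ k then u (k-1) else 0))) + b n ≤ u n := by
    intro n
    induction n with
    | zero => simp [hb, hu, gwU]
    | succ m ih =>
      rw [Finset.sum_range_succ, hbstep, hu, gwU_step]
      have := hkey m
      rw [← hu] at *
      linarith
  -- main bound
  have hmain : ∀ n : ℕ, a n ≤ 3/2 * u n := by
    intro n
    induction n using Nat.strong_induction_on with
    | _ n ih =>
      have hsum : ∑ k ∈ Finset.range n, (κ * a k + lam * (if 1 ≤ k then a (k-1) else 0)) ≤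
          3/2 * ∑ k ∈ Finset.range n, (κ * u k + lam * (if 1 ≤ k then u (k-1) else 0)) := by
        rw [Finset.mul_sum]
        apply Finset.sum_le_sum
        intro k hk
        have hk' := Finset.mem_range.mp hk
        have h1 : a k ≤ 3/2 * u k := ih k hk'
        by_cases h : 1 ≤ k
        · have h2 : a (k-1) ≤ 3/2 * u (k-1) := ih (k-1) (by omega)
          simp only [if_pos h]
          nlinarith
        · simp only [if_neg h]
          nlinarith
      have h2 := hA n
      have h3 := hbnn n
      have h4 := hrec n
      have hSnn : 0 ≤ ∑ k ∈ Finset.range n, (κ * u k + lam * (if 1 ≤ k then u (k-1) else 0)) := by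
        apply Finset.sum_nonneg
        intro k _
        rcases le_or_gt 1 k with h|h
        · rw [if_pos h]
          exact add_nonneg (mul_nonneg hκ (hunn k)) (mul_nonneg hlam (hunn (k-1)))
        · rw [if_neg (by omega), mul_zero, add_zero]
          exact mul_nonneg hκ (hunn k)
      simp only [hb] at h2 h3
      linarith
  -- closed forms
  have hβne1 : β - 1 ≠ 0 := by intro h; linarith [sub_eq_zero.mp h]
  intro n
  constructor
  · intro hc4β
    have hform : ∀ m : ℕ, u m = c₁ * β ^ m + c₂ * (β ^ m - 1) / (β - 1) + c₃ * m * β ^ m := by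
      intro m
      induction m with
      | zero => simp [hu, gwU]
      | succ p ih =>
        rw [hu, gwU_step, ← hu, ih, hc4β]
        field_simp
        push_cast
        ring
    have := hmain n
    rw [hform n] at this
    have heq : 3/2 * (c₁ * β ^ n + c₂ * (β ^ n - 1) / (β - 1) + c₃ * n * β ^ n) =
        3 / 2 * β ^ n * c₁ + 3 * c₂ * (β ^ n - 1) / (2 * (β - 1)) + 3 / 2 * c₃ * n * β ^ n := by
      field_simp
    linarith [heq ▸ this]
  · intro hc4β
    have hne : c₄ - β ≠ 0 := sub_ne_zero.mpr hc4β
    have hform : ∀ m : ℕ, u m = c₁ * β ^ m + c₂ * (β ^ m - 1) / (β - 1) +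
        c₃ * (c₄ ^ (m+1) - c₄ * β ^ m) / (c₄ - β) := by
      intro m
      induction m with
      | zero => simp [hu, gwU]
      | succ p ih =>
        rw [hu, gwU_step, ← hu, ih]
        have e1 : c₂ * (β ^ (p+1) - 1) / (β - 1) = β * (c₂ * (β ^ p - 1) / (β - 1)) + c₂ := by
          field_simp; ring
        have e2 : c₃ * (c₄ ^ (p+1+1) - c₄ * β ^ (p+1)) / (c₄ - β) =
            β * (c₃ * (c₄ ^ (p+1) - c₄ * β ^ p) / (c₄ - β)) + c₃ * c₄ ^ (p+1) := by
          field_simp; ring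
        linear_combination -e1 - e2
    have := hmain n
    rw [hform n] at this
    have heq : 3/2 * (c₁ * β ^ n + c₂ * (β ^ n - 1) / (β - 1) +
        c₃ * (c₄ ^ (n+1) - c₄ * β ^ n) / (c₄ - β)) =
        3 / 2 * β ^ n * c₁ + 3 * c₂ * (β ^ n - 1) / (2 * (β - 1)) +
          3 * c₃ * (c₄ ^ (n + 1) - c₄ * β ^ n) / (2 * (c₄ - β)) := by
      field_simp
    linarith [heq ▸ this]
end

section
/- Let κ, λ ∈ [0,∞) and set x₁ = ((1+κ) − √((1+κ)² + 4λ))/2 and x₂ = ((1+κ) + √((1+κ)² + 4λ))/2. Then x₁ ≠ x₂, |x₁| ≤ x₂, |x₁|/(x₂ − x₁) ≤ 1/2, x₂/(x₂ − x₁) ≤ 1, and for all n ∈ ℕ₀ and all k ∈ {0,1,...,n} it holds that |x₂^{n−k+1} − x₁^{n−k+1}|/(x₂ − x₁) ≤ (3/2) |x₂|^{n−k}. -/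
/-- Properties of the roots of the quadratic equation `x² = (1+κ)x + λ`. -/
theorem quadratic_roots_estimates (κ lam x₁ x₂ : ℝ) (hκ : 0 ≤ κ) (hlam : 0 ≤ lam)
    (hx₁ : x₁ = ((1 + κ) - Real.sqrt ((1 + κ) ^ 2 + 4 * lam)) / 2)
    (hx₂ : x₂ = ((1 + κ) + Real.sqrt ((1 + κ) ^ 2 + 4 * lam)) / 2) :
    x₁ ≠ x₂ ∧ |x₁| ≤ x₂ ∧ |x₁| / (x₂ - x₁) ≤ 1 / 2 ∧ x₂ / (x₂ - x₁) ≤ 1 ∧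
      ∀ n k : ℕ, k ≤ n →
        |x₂ ^ (n - k + 1) - x₁ ^ (n - k + 1)| / (x₂ - x₁) ≤
          3 / 2 * |x₂| ^ (n - k) := by
  set s := Real.sqrt ((1 + κ) ^ 2 + 4 * lam) with hs
  have hs1 : 1 + κ ≤ s := by
    have h := Real.sqrt_le_sqrt (show (1 + κ) ^ 2 ≤ (1 + κ) ^ 2 + 4 * lam by linarith)
    rwa [Real.sqrt_sq (by linarith)] at h
  have hspos : 0 < s := by linarith
  have hdiff : x₂ - x₁ = s := by rw [hx₁, hx₂]; ring
  have hx1np : x₁ ≤ 0 := by rw [hx₁]; linarith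
  have habs : |x₁| = (s - (1 + κ)) / 2 := by
    rw [abs_of_nonpos hx1np, hx₁]; ring
  have hx2pos : 0 < x₂ := by rw [hx₂]; linarith
  refine ⟨?_, ?_, ?_, ?_, ?_⟩
  · intro h
    rw [hx₁, hx₂] at h
    linarith
  · rw [habs, hx₂]; linarith
  · rw [hdiff, habs, div_le_div_iff₀ hspos (by norm_num)]; linarith
  · rw [hdiff, div_le_one hspos, hx₂]; linarith
  · intro n k hk
    set m := n - k
    have hx2m : 0 ≤ x₂ ^ m := pow_nonneg hx2pos.le m
    have key : |x₂ ^ (m + 1) - x₁ ^ (m + 1)| ≤ s * x₂ ^ m := by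
      calc |x₂ ^ (m + 1) - x₁ ^ (m + 1)| ≤ |x₂ ^ (m + 1)| + |x₁ ^ (m + 1)| :=
            abs_sub _ _
        _ = x₂ * x₂ ^ m + |x₁| * |x₁| ^ m := by
            rw [abs_of_nonneg (pow_nonneg hx2pos.le _), abs_pow, pow_succ, pow_succ]
            ring
        _ ≤ x₂ * x₂ ^ m + |x₁| * x₂ ^ m := by
            have h1 : |x₁| ≤ x₂ := by rw [habs, hx₂]; linarith
            have := pow_le_pow_left₀ (abs_nonneg x₁) h1 m
            nlinarith [abs_nonneg x₁]
        _ = (x₂ + |x₁|) * x₂ ^ m := by ring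
        _ = s * x₂ ^ m := by rw [habs, hx₂]; ring
    rw [hdiff, div_le_iff₀ hspos, abs_of_pos hx2pos]
    calc |x₂ ^ (m + 1) - x₁ ^ (m + 1)| ≤ s * x₂ ^ m := key
      _ ≤ 3 / 2 * x₂ ^ m * s := by nlinarith
end

section
/- Let T, L ∈ (0,∞), d ∈ ℕ, ξ ∈ ℝ^d, let ‖·‖ denote the Euclidean norm on ℝ^d, let μ : ℝ^d × ℝ^d → ℝ^d be continuous and satisfy ‖μ(x₁,y₁) − μ(x₂,y₂)‖ ≤ (L/2)‖x₁ − x₂‖ + (L/2)‖y₁ − y₂‖ for all x₁, y₁, x₂, y₂ ∈ ℝ^d, let (Ω, F, P) be a probability space, let W⁰ : [0,T] × Ω → ℝ^d be a standard d-dimensional Brownian motion with continuous sample paths, and let X : [0,T] × Ω → ℝ^d be a stochastic process, adapted to the filtration generated by W⁰, with continuous sample paths, satisfying ∫₀^T (E[‖X(s)‖²])^{1/2} ds < ∞ and, for all t ∈ [0,T], X(t) = ξ + ∫₀^t ∫ μ(X(s), x) P(X(s) ∈ dx) ds + W⁰(t). Then for all t ∈ [0,T] it holds that (E[‖X(t)‖²])^{1/2}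 ≤ [ ‖ξ‖ + ‖μ(0,0)‖ t + √(t d) ] e^{L t}. -/
open MeasureTheory ProbabilityTheory

/-- `W` is a standard `d`-dimensional Brownian motion on the time interval `[0,T]`
(with continuous sample paths): the time-zero value is `0`, the sample paths are
continuous on `[0,T]`, the increments over disjoint consecutive time intervals in `[0,T]`
are independent, and each increment `W(t) - W(s)` (for `0 ≤ s ≤ t ≤ T`) is centered
Gaussian with covariance `(t-s)` times the identity, i.e. its `d` coordinates are
independent real Gaussian random variables with mean `0` and variance `t - s`. -/
def IsStdBrownianMotion {Ω : Type*} [MeasurableSpace Ω] (d : ℕ) (T : ℝ)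
    (P : Measure Ω) (W : ℝ → Ω → EuclideanSpace ℝ (Fin d)) : Prop :=
  (∀ t ∈ Set.Icc (0 : ℝ) T, Measurable (W t)) ∧
  (∀ ω, W 0 ω = 0) ∧
  (∀ ω, ContinuousOn (fun t => W t ω) (Set.Icc (0 : ℝ) T)) ∧
  (∀ (n : ℕ) (t : Fin (n + 1) → ℝ), (∀ i, t i ∈ Set.Icc (0 : ℝ) T) → Monotone t →
    iIndepFun (m := fun _ => inferInstance)
      (fun (i : Fin n) ω => W (t i.succ) ω - W (t i.castSucc) ω) P) ∧
  (∀ s t : ℝ, 0 ≤ s → s ≤ t → t ≤ T →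
    iIndepFun (m := fun _ => inferInstance) (fun (i : Fin d) ω => W t ω i - W s ω i) P ∧
    ∀ i : Fin d, Measure.map (fun ω => W t ω i - W s ω i) P =
      gaussianReal 0 (Real.toNNReal (t - s)))

section Auxiliary

open Real Set Function
open scoped NNReal ENNReal

/-- Second moment of a centered Gaussian integral: `∫ x² e^{-bx²} dx`. -/
lemma aux_integral_sq_exp_neg_mul_sq {b : ℝ} (hb : 0 < b) :
    ∫ x : ℝ, x ^ 2 * Real.exp (-b * x ^ 2) = b ^ (-(3:ℝ)/2) * Real.Gamma (3/2) := by
  have h1 : ∀ x : ℝ, x ^ 2 * Real.exp (-b * x ^ 2)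
      = (fun u => u ^ 2 * Real.exp (-b * u ^ 2)) |x| := by
    intro x; simp [sq_abs]
  calc ∫ x : ℝ, x ^ 2 * Real.exp (-b * x ^ 2)
      = ∫ x : ℝ, (fun u => u ^ 2 * Real.exp (-b * u ^ 2)) |x| :=
        integral_congr_ae (Filter.Eventually.of_forall h1)
    _ = 2 * ∫ x in Ioi (0:ℝ), x ^ 2 * Real.exp (-b * x ^ 2) :=
        integral_comp_abs (f := fun u => u ^ 2 * Real.exp (-b * u ^ 2))
    _ = 2 * ∫ x in Ioi (0:ℝ), x ^ (2:ℝ) * Real.exp (-b * x ^ (2:ℝ)) := by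
        congr 1
        refine setIntegral_congr_fun measurableSet_Ioi (fun x hx => ?_)
        rw [show ((2:ℝ) = ((2:ℕ):ℝ)) by norm_num, Real.rpow_natCast]
    _ = 2 * (b ^ (-((2:ℝ) + 1) / 2) * (1 / 2) * Real.Gamma (((2:ℝ) + 1) / 2)) := by
        rw [integral_rpow_mul_exp_neg_mul_rpow (by norm_num) (by norm_num) hb]
    _ = b ^ (-(3:ℝ)/2) * Real.Gamma (3/2) := by norm_num; ring

lemma aux_gamma_three_halves : Real.Gamma (3/2) = Real.sqrt π / 2 := by
  have h : Real.Gamma ((1:ℝ)/2 + 1) = (1/2) * Real.Gamma (1/2) := Real.Gamma_add_one (by norm_num)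
  rw [show (3:ℝ)/2 = 1/2 + 1 by norm_num, h, Real.Gamma_one_half_eq]; ring

lemma aux_pdf_eq (v : ℝ≥0) (hv : v ≠ 0) (x : ℝ) :
    gaussianPDFReal 0 v x = (Real.sqrt (2 * π * v))⁻¹ * Real.exp (-(2*(v:ℝ))⁻¹ * x ^ 2) := by
  rw [gaussianPDFReal_def]
  simp only [sub_zero]
  congr 1
  rw [div_eq_mul_inv, neg_mul_comm]
  ring_nf

lemma aux_integrable_sq_mul_gaussianPDFReal (v : ℝ≥0) (hv : v ≠ 0) :
    Integrable (fun x : ℝ => gaussianPDFReal 0 v x * x ^ 2) := by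
  have hv' : (0:ℝ) < v := lt_of_le_of_ne v.coe_nonneg (by exact_mod_cast (Ne.symm hv))
  have hb : (0:ℝ) < (2*(v:ℝ))⁻¹ := by positivity
  have h := (integrable_rpow_mul_exp_neg_mul_sq hb (s := 2) (by norm_num)).const_mul
    ((Real.sqrt (2 * π * v))⁻¹)
  refine h.congr (Filter.Eventually.of_forall fun x => ?_)
  simp only [aux_pdf_eq v hv]
  rw [show ((2:ℝ) = ((2:ℕ):ℝ)) by norm_num] at *
  rw [Real.rpow_natCast]
  ring

lemma aux_integral_sq_mul_gaussianPDFReal (v : ℝ≥0) (hv : v ≠ 0) :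
    ∫ x : ℝ, gaussianPDFReal 0 v x * x ^ 2 = v := by
  have hv' : (0:ℝ) < v := lt_of_le_of_ne v.coe_nonneg (by exact_mod_cast (Ne.symm hv))
  have ha : (0:ℝ) < 2 * v := by positivity
  have hb : (0:ℝ) < (2*(v:ℝ))⁻¹ := by positivity
  have heq : (fun x : ℝ => gaussianPDFReal 0 v x * x ^ 2)
      = fun x => (Real.sqrt (2 * π * v))⁻¹ * (x ^ 2 * Real.exp (-(2*(v:ℝ))⁻¹ * x ^ 2)) := by
    funext x; rw [aux_pdf_eq v hv]; ring
  rw [heq, integral_const_mul, aux_integral_sq_exp_neg_mul_sq hb, aux_gamma_three_halves]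
  have h1 : ((2*(v:ℝ))⁻¹) ^ (-(3:ℝ)/2) = (2*(v:ℝ)) ^ ((3:ℝ)/2) := by
    rw [Real.inv_rpow ha.le, ← Real.rpow_neg ha.le]; norm_num
  have h2 : (2*(v:ℝ)) ^ ((3:ℝ)/2) = (2*(v:ℝ)) * Real.sqrt (2*(v:ℝ)) := by
    rw [show ((3:ℝ)/2 = 1 + 1/2) by norm_num, Real.rpow_add ha, Real.rpow_one,
      ← Real.sqrt_eq_rpow]
  have h3 : Real.sqrt (2 * π * v) = Real.sqrt π * Real.sqrt (2*(v:ℝ)) := by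
    rw [show (2 * π * (v:ℝ) = π * (2*v)) by ring, Real.sqrt_mul Real.pi_pos.le]
  rw [h1, h2, h3]
  have hs1 : (0:ℝ) < Real.sqrt π := Real.sqrt_pos.mpr Real.pi_pos
  have hs2 : (0:ℝ) < Real.sqrt (2*(v:ℝ)) := Real.sqrt_pos.mpr ha
  field_simp

lemma aux_lintegral_sq_gaussianReal (v : ℝ≥0) :
    ∫⁻ x, ENNReal.ofReal (x ^ 2) ∂(gaussianReal 0 v) = (v : ℝ≥0∞) := by
  rcases eq_or_ne v 0 with rfl | hv
  · rw [gaussianReal_zero_var]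
    rw [lintegral_dirac' _ (by measurability)]
    simp
  · rw [gaussianReal_of_var_ne_zero _ hv,
      lintegral_withDensity_eq_lintegral_mul _ (measurable_gaussianPDF _ _)
        (by measurability)]
    have h : ∀ x : ℝ, (gaussianPDF 0 v * fun x => ENNReal.ofReal (x ^ 2)) x
        = ENNReal.ofReal (gaussianPDFReal 0 v x * x ^ 2) := by
      intro x
      simp [gaussianPDF, ENNReal.ofReal_mul (gaussianPDFReal_nonneg 0 v x)]
    simp_rw [h]
    rw [← ofReal_integral_eq_lintegral_ofReal (aux_integrable_sq_mul_gaussianPDFReal v hv)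
      (Filter.Eventually.of_forall fun x => mul_nonneg (gaussianPDFReal_nonneg 0 v x)
        (sq_nonneg x))]
    rw [aux_integral_sq_mul_gaussianPDFReal v hv]
    simp

/-- `L²` norm of the Brownian motion at time `t`. -/
lemma aux_bm_eLpNorm {Ω : Type*} [MeasurableSpace Ω] {d : ℕ} {T : ℝ} {P : Measure Ω}
    [IsProbabilityMeasure P] {W : ℝ → Ω → EuclideanSpace ℝ (Fin d)}
    (hW : IsStdBrownianMotion d T P W) {t : ℝ} (ht : t ∈ Set.Icc (0:ℝ) T) :
    eLpNorm (W t) 2 P = ENNReal.ofReal (Real.sqrt (t * d)) := by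
  obtain ⟨hWmeas, hW0, -, -, hWgauss⟩ := hW
  have hmap : ∀ i : Fin d, Measure.map (fun ω => W t ω i) P = gaussianReal 0 t.toNNReal := by
    intro i
    have h := (hWgauss 0 t le_rfl ht.1 ht.2).2 i
    have he : (fun ω => W t ω i - W 0 ω i) = fun ω => W t ω i := by
      funext ω; rw [hW0 ω]; simp
    rw [he] at h
    simpa using h
  have hWt := hWmeas t ht
  have hWti : ∀ i : Fin d, Measurable (fun ω => W t ω i) := by
    intro i
    exact (EuclideanSpace.proj (𝕜 := ℝ) i).continuous.measurable.comp hWt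
  have key : ∫⁻ ω, (‖W t ω‖₊ : ℝ≥0∞) ^ (2:ℝ) ∂P = (d : ℝ≥0∞) * ENNReal.ofReal t := by
    have hpt : ∀ ω, (‖W t ω‖₊ : ℝ≥0∞) ^ (2:ℝ)
        = ∑ i : Fin d, ENNReal.ofReal ((W t ω i) ^ 2) := by
      intro ω
      rw [← enorm_eq_nnnorm, ← ofReal_norm, ENNReal.ofReal_rpow_of_nonneg (norm_nonneg _) (by norm_num),
        show ((2:ℝ) = ((2:ℕ):ℝ)) by norm_num, Real.rpow_natCast]
      rw [EuclideanSpace.norm_eq, Real.sq_sqrt (by positivity)]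
      rw [ENNReal.ofReal_sum_of_nonneg (fun i _ => by positivity)]
      congr 1; funext i; rw [Real.norm_eq_abs, sq_abs]
    simp_rw [hpt]
    rw [lintegral_finset_sum _ (fun i _ => by
      exact ((hWti i).pow_const 2).ennreal_ofReal)]
    have hea : ∀ i : Fin d, ∫⁻ ω, ENNReal.ofReal ((W t ω i) ^ 2) ∂P = ENNReal.ofReal t := by
      intro i
      have hlm := lintegral_map (μ := P) (g := fun ω => W t ω i)
        (f := fun x => ENNReal.ofReal (x ^ 2)) (by measurability) (hWti i)
      rw [← hlm, hmap i, aux_lintegral_sq_gaussianReal]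
      rw [ENNReal.ofReal]
    simp_rw [hea]
    simp [Finset.card_univ]
  rw [eLpNorm_eq_lintegral_rpow_enorm_toReal (by norm_num) (by norm_num)]
  simp only [enorm_eq_nnnorm]
  rw [show ENNReal.toReal 2 = (2:ℝ) by simp]
  rw [key]
  rw [show ((d : ℝ≥0∞) = ENNReal.ofReal (d:ℝ)) by simp, ← ENNReal.ofReal_mul (by positivity),
    ENNReal.ofReal_rpow_of_nonneg (mul_nonneg (Nat.cast_nonneg d) ht.1) (by norm_num)]
  rw [← Real.sqrt_eq_rpow, mul_comm (d:ℝ) t]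

/-- Minkowski-type inequality for the `L²` norm of an integral, proved via Cauchy-Schwarz. -/
lemma aux_lintegral_sq_lintegral_le {α Ω : Type*} [MeasurableSpace α] [MeasurableSpace Ω]
    (μ : Measure α) (ν : Measure Ω) [SFinite μ] [SFinite ν]
    {g : α → Ω → ℝ≥0∞} (hg : Measurable (Function.uncurry g)) :
    ∫⁻ ω, (∫⁻ s, g s ω ∂μ) ^ (2:ℝ) ∂ν
      ≤ ((∫⁻ s, (∫⁻ ω, (g s ω) ^ (2:ℝ) ∂ν) ^ (1/(2:ℝ)) ∂μ)) ^ (2:ℝ) := by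
  have hg1 : ∀ s, Measurable (g s) := fun s =>
    hg.comp (measurable_const.prodMk measurable_id)
  have hg2 : ∀ ω, Measurable (fun s => g s ω) := fun ω =>
    hg.comp (measurable_id.prodMk measurable_const)
  set I : α → ℝ≥0∞ := fun s => (∫⁻ ω, (g s ω) ^ (2:ℝ) ∂ν) ^ (1/(2:ℝ)) with hI
  have hImeas : Measurable I := by
    apply Measurable.pow_const
    apply Measurable.lintegral_prod_right
    exact (hg.pow_const _)
  have hCS : ∀ s s', ∫⁻ ω, g s ω * g s' ω ∂ν ≤ I s * I s' := by
    intro s s'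
    have h := ENNReal.lintegral_mul_le_Lp_mul_Lq ν (p := 2) (q := 2)
      Real.HolderConjugate.two_two (hg1 s).aemeasurable (hg1 s').aemeasurable
    simpa [I, one_div] using h
  have hsq : ∀ ω, (∫⁻ s, g s ω ∂μ) ^ (2:ℝ) = ∫⁻ s, ∫⁻ s', g s ω * g s' ω ∂μ ∂μ := by
    intro ω
    rw [show ((2:ℝ) = ((2:ℕ):ℝ)) by norm_num, ENNReal.rpow_natCast, sq]
    calc (∫⁻ s, g s ω ∂μ) * (∫⁻ s', g s' ω ∂μ)
        = ∫⁻ s, g s ω * ∫⁻ s', g s' ω ∂μ ∂μ := by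
          rw [lintegral_mul_const _ (hg2 ω)]
      _ = ∫⁻ s, ∫⁻ s', g s ω * g s' ω ∂μ ∂μ := by
          congr 1; funext s; rw [lintegral_const_mul _ (hg2 ω)]
  simp_rw [hsq]
  have hswap1 : ∫⁻ ω, ∫⁻ s, (∫⁻ s', g s ω * g s' ω ∂μ) ∂μ ∂ν
      = ∫⁻ s, ∫⁻ ω, (∫⁻ s', g s ω * g s' ω ∂μ) ∂ν ∂μ := by
    apply lintegral_lintegral_swap
    apply Measurable.aemeasurable
    apply Measurable.lintegral_prod_right (f := fun (p : Ω × α) s' => g p.2 p.1 * g s' p.1)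
    exact ((hg.comp (measurable_fst.snd.prodMk measurable_fst.fst)).mul
      (hg.comp (measurable_snd.prodMk measurable_fst.fst)))
  rw [hswap1]
  have hswap2 : ∀ s, ∫⁻ ω, (∫⁻ s', g s ω * g s' ω ∂μ) ∂ν
      = ∫⁻ s', (∫⁻ ω, g s ω * g s' ω ∂ν) ∂μ := by
    intro s
    apply lintegral_lintegral_swap
    apply Measurable.aemeasurable
    exact ((hg.comp (measurable_const.prodMk measurable_fst)).mul
      (hg.comp (measurable_snd.prodMk measurable_fst)))
  calc ∫⁻ s, ∫⁻ ω, (∫⁻ s', g s ω * g s' ω ∂μ) ∂ν ∂μ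
      = ∫⁻ s, ∫⁻ s', (∫⁻ ω, g s ω * g s' ω ∂ν) ∂μ ∂μ := by
        congr 1; funext s; exact hswap2 s
    _ ≤ ∫⁻ s, ∫⁻ s', I s * I s' ∂μ ∂μ :=
        lintegral_mono fun s => lintegral_mono fun s' => hCS s s'
    _ = (∫⁻ s, I s ∂μ) ^ (2:ℝ) := by
        rw [show ((2:ℝ) = ((2:ℕ):ℝ)) by norm_num, ENNReal.rpow_natCast, sq]
        rw [← lintegral_mul_const _ hImeas]
        congr 1; funext s; rw [lintegral_const_mul _ hImeas]

/-- Grönwall-type lemma for an integral inequality. -/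
lemma aux_gronwall (T L : ℝ) (hL : 0 < L) (B ρ : ℝ → ℝ)
    (hB_cont : Continuous B) (hB_nonneg : ∀ t, 0 ≤ t → 0 ≤ B t)
    (hB_mono : ∀ ⦃s t : ℝ⦄, 0 ≤ s → s ≤ t → B s ≤ B t)
    (hρ_nonneg : ∀ s, 0 ≤ ρ s)
    (hρ_int : IntegrableOn ρ (Icc 0 T))
    (hineq : ∀ t ∈ Icc (0:ℝ) T, ρ t ≤ B t + L * ∫ s in (0:ℝ)..t, ρ s) :
    ∀ t ∈ Icc (0:ℝ) T, B t + L * ∫ s in (0:ℝ)..t, ρ s ≤ B t * Real.exp (L * t) := by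
  set ρ' : ℝ → ℝ := (Icc (0:ℝ) T).indicator ρ with hρ'
  have hρ'_int : Integrable ρ' := (integrable_indicator_iff measurableSet_Icc).mpr hρ_int
  have hρ'_nonneg : ∀ s, 0 ≤ ρ' s := fun s => Set.indicator_nonneg (fun x _ => hρ_nonneg x) s
  have hInt_eq : ∀ t ∈ Icc (0:ℝ) T, (∫ s in (0:ℝ)..t, ρ' s) = ∫ s in (0:ℝ)..t, ρ s := by
    intro t ht
    refine intervalIntegral.integral_congr (fun s hs => ?_)
    rw [uIcc_of_le ht.1] at hs
    exact Set.indicator_of_mem (mem_of_mem_of_subset hs (Icc_subset_Icc le_rfl ht.2)) ρ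
  set R : ℝ → ℝ := fun t => ∫ s in (0:ℝ)..t, ρ' s with hR
  have hR_cont : Continuous R :=
    intervalIntegral.continuous_primitive (fun a b => hρ'_int.intervalIntegrable) 0
  have hR_nonneg : ∀ t, 0 ≤ t → 0 ≤ R t := fun t ht =>
    intervalIntegral.integral_nonneg ht (fun s _ => hρ'_nonneg s)
  set φ : ℝ → ℝ := fun s => B s + L * R s with hφ
  have hφ_cont : Continuous φ := hB_cont.add (continuous_const.mul hR_cont)
  set G : ℝ → ℝ := fun t => ∫ s in (0:ℝ)..t, φ s with hG
  have hG_deriv : ∀ t : ℝ, HasDerivAt G (φ t) t := fun t =>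
    intervalIntegral.integral_hasDerivAt_right (hφ_cont.intervalIntegrable _ _)
      hφ_cont.stronglyMeasurable.stronglyMeasurableAtFilter hφ_cont.continuousAt
  have hG_nonneg : ∀ t, 0 ≤ t → 0 ≤ G t := fun t ht =>
    intervalIntegral.integral_nonneg ht (fun s hs =>
      add_nonneg (hB_nonneg s hs.1) (mul_nonneg hL.le (hR_nonneg s hs.1)))
  have hRG : ∀ t ∈ Icc (0:ℝ) T, R t ≤ G t := by
    intro t ht
    refine intervalIntegral.integral_mono_on ht.1 (hρ'_int.intervalIntegrable)
      (hφ_cont.intervalIntegrable _ _) (fun s hs => ?_)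
    have hsT : s ∈ Icc (0:ℝ) T := ⟨hs.1, hs.2.trans ht.2⟩
    have h := hineq s hsT
    rw [← hInt_eq s hsT] at h
    calc ρ' s = ρ s := Set.indicator_of_mem hsT ρ
      _ ≤ _ := h
  intro t ht
  have key := norm_le_gronwallBound_of_norm_deriv_right_le
    (f := G) (f' := φ) (δ := 0) (K := L) (ε := B t) (a := 0) (b := t)
    (intervalIntegral.continuous_primitive (fun a b => hφ_cont.intervalIntegrable a b)
      0).continuousOn
    (fun x _ => (hG_deriv x).hasDerivWithinAt)
    (by simp [hG, intervalIntegral.integral_same]) ?bound t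
    (by exact ⟨ht.1, le_rfl⟩)
  case bound =>
    intro x hx
    have hx0 : (0:ℝ) ≤ x := hx.1
    have hxT : x ∈ Icc (0:ℝ) T := ⟨hx0, hx.2.le.trans ht.2⟩
    have h1 : φ x ≤ L * G x + B t := by
      have hBx : B x ≤ B t := hB_mono hx0 hx.2.le
      have h2 : R x ≤ G x := hRG x hxT
      show B x + L * R x ≤ L * G x + B t
      nlinarith
    calc ‖φ x‖ = φ x := by
          exact Real.norm_of_nonneg
            (add_nonneg (hB_nonneg x hx0) (mul_nonneg hL.le (hR_nonneg x hx0)))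
      _ ≤ L * G x + B t := h1
      _ ≤ L * ‖G x‖ + B t := by
          gcongr; exact le_abs_self _
  have hGb : G t ≤ B t / L * (Real.exp (L * t) - 1) := by
    have h0 : gronwallBound 0 L (B t) (t - 0) = B t / L * (Real.exp (L * (t-0)) - 1) := by
      rw [gronwallBound_of_K_ne_0 hL.ne']; ring_nf
    calc G t ≤ ‖G t‖ := le_abs_self _
      _ ≤ _ := key
      _ = B t / L * (Real.exp (L * t) - 1) := by rw [h0]; norm_num
  have hRt : R t ≤ G t := hRG t ht
  have hfin : B t + L * R t ≤ B t * Real.exp (L * t) := by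
    have h3 : L * R t ≤ L * G t := mul_le_mul_of_nonneg_left hRt hL.le
    have h4 : L * G t ≤ L * (B t / L * (Real.exp (L * t) - 1)) :=
      mul_le_mul_of_nonneg_left hGb hL.le
    have h5 : L * (B t / L * (Real.exp (L * t) - 1)) = B t * Real.exp (L * t) - B t := by
      field_simp
    linarith
  calc B t + L * ∫ s in (0:ℝ)..t, ρ s = B t + L * R t := by rw [← hInt_eq t ht]
    _ ≤ B t * Real.exp (L * t) := hfin

end Auxiliary

/-- A priori bound for the second moment of the solution of the McKean-Vlasov SDE:
`(E[‖X(t)‖²])^{1/2} ≤ (‖ξ‖ + ‖μ(0,0)‖ t + √(t d)) e^{L t}`. -/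
theorem mckean_vlasov_second_moment_bound
    (T L : ℝ) (hT : 0 < T) (hL : 0 < L) (d : ℕ) (hd : 1 ≤ d)
    (ξ : EuclideanSpace ℝ (Fin d))
    (μ : EuclideanSpace ℝ (Fin d) → EuclideanSpace ℝ (Fin d) → EuclideanSpace ℝ (Fin d))
    (hμ_cont : Continuous
      (fun p : EuclideanSpace ℝ (Fin d) × EuclideanSpace ℝ (Fin d) => μ p.1 p.2))
    (hμ_lip : ∀ x₁ y₁ x₂ y₂ : EuclideanSpace ℝ (Fin d),
      ‖μ x₁ y₁ - μ x₂ y₂‖ ≤ L / 2 * ‖x₁ - x₂‖ + L / 2 * ‖y₁ - y₂‖)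
    {Ω : Type*} [MeasurableSpace Ω] (P : Measure Ω) [IsProbabilityMeasure P]
    (W : ℝ → Ω → EuclideanSpace ℝ (Fin d))
    (hW : IsStdBrownianMotion d T P W)
    (X : ℝ → Ω → EuclideanSpace ℝ (Fin d))
    -- `X` is a stochastic process adapted to the filtration generated by `W`
    (hX_meas : ∀ t ∈ Set.Icc (0 : ℝ) T, Measurable (X t))
    (hX_adapted : ∀ t ∈ Set.Icc (0 : ℝ) T,
      @Measurable Ω _ (⨆ s ∈ Set.Icc (0 : ℝ) t, MeasurableSpace.comap (W s) inferInstance)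
        _ (X t))
    -- `X` has continuous sample paths
    (hX_cont : ∀ ω, ContinuousOn (fun t => X t ω) (Set.Icc (0 : ℝ) T))
    -- `∫₀ᵀ (E[‖X(s)‖²])^{1/2} ds < ∞`
    (hX_int : ∫⁻ s in Set.Icc (0 : ℝ) T, eLpNorm (X s) 2 P < ⊤)
    -- the McKean-Vlasov equation
    (hX_eq : ∀ t ∈ Set.Icc (0 : ℝ) T, ∀ᵐ ω ∂P,
      X t ω = ξ + (∫ s in (0 : ℝ)..t, ∫ x, μ (X s ω) x ∂(Measure.map (X s) P)) + W t ω) :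
    ∀ t ∈ Set.Icc (0 : ℝ) T,
      eLpNorm (X t) 2 P ≤
        ENNReal.ofReal ((‖ξ‖ + ‖μ 0 0‖ * t + Real.sqrt (t * d)) * Real.exp (L * t)) := by
  have hT0 : (0:ℝ) ≤ T := hT.le
  set c : ℝ := ‖μ 0 0‖ with hc
  have hc0 : 0 ≤ c := norm_nonneg _
  set B : ℝ → ℝ := fun t => ‖ξ‖ + c * t + Real.sqrt (t * d) with hB
  -- the extended process
  set Y : ℝ → Ω → EuclideanSpace ℝ (Fin d) :=
    fun s ω => X ((Set.projIcc 0 T hT0 s : Set.Icc (0:ℝ) T) : ℝ) ω with hYdef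
  have hYX : ∀ s ∈ Set.Icc (0:ℝ) T, Y s = X s := by
    intro s hs
    simp only [hYdef, Set.projIcc_of_mem hT0 hs]
  have hY_meas : ∀ s, Measurable (Y s) :=
    fun s => hX_meas _ (Set.projIcc 0 T hT0 s).2
  have hY_cont : ∀ ω, Continuous (fun s => Y s ω) := by
    intro ω
    exact (hX_cont ω).comp_continuous
      (continuous_subtype_val.comp continuous_projIcc)
      (fun s => (Set.projIcc 0 T hT0 s).2)
  have hYunc : Measurable (Function.uncurry Y) :=
    measurable_uncurry_of_continuous_of_measurable (fun ω => hY_cont ω) hY_meas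
  -- enorm kernel
  set g : ℝ → Ω → ENNReal := fun s ω => (‖Y s ω‖₊ : ENNReal) with hgdef
  have hg_meas : Measurable (Function.uncurry g) := hYunc.nnnorm.coe_nnreal_ennreal
  -- the L² norm as a function of time
  set F : ℝ → ENNReal := fun s => (∫⁻ ω, g s ω ^ (2:ℝ) ∂P) ^ (1/(2:ℝ)) with hF
  have hF_meas : Measurable F :=
    (Measurable.lintegral_prod_right (hg_meas.pow_const _)).pow_const _
  have heLp : ∀ (f : Ω → EuclideanSpace ℝ (Fin d)),
      eLpNorm f 2 P = (∫⁻ ω, (‖f ω‖₊ : ENNReal) ^ (2:ℝ) ∂P) ^ (1/(2:ℝ)) := by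
    intro f
    rw [eLpNorm_eq_lintegral_rpow_enorm_toReal (by norm_num) (by norm_num)]
    simp only [enorm_eq_nnnorm]
    norm_num
  have hFY : ∀ s, F s = eLpNorm (Y s) 2 P := fun s => (heLp (Y s)).symm
  have hF_eq : ∀ s ∈ Set.Icc (0:ℝ) T, F s = eLpNorm (X s) 2 P := by
    intro s hs; rw [hFY s, hYX s hs]
  -- integrability of F
  have hF_lt : ∫⁻ s in Set.Icc (0:ℝ) T, F s < ⊤ := by
    rw [setLIntegral_congr_fun measurableSet_Icc
      (fun s hs => hF_eq s hs)]
    exact hX_int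
  have hF_ae : ∀ᵐ s ∂(MeasureTheory.volume.restrict (Set.Icc (0:ℝ) T)), F s < ⊤ :=
    ae_lt_top hF_meas hF_lt.ne
  set ρ : ℝ → ℝ := fun s => (F s).toReal with hρdef
  have hρ_nonneg : ∀ s, 0 ≤ ρ s := fun s => ENNReal.toReal_nonneg
  have hρ_int : MeasureTheory.IntegrableOn ρ (Set.Icc (0:ℝ) T) :=
    integrable_toReal_of_lintegral_ne_top hF_meas.aemeasurable.restrict hF_lt.ne
  -- first moment function
  set m : ℝ → ℝ := fun s => (∫⁻ ω, g s ω ∂P).toReal with hm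
  have hm_nonneg : ∀ s, 0 ≤ m s := fun s => ENNReal.toReal_nonneg
  have hm_meas : Measurable m := (Measurable.lintegral_prod_right hg_meas).ennreal_toReal
  have hm_le : ∀ s, F s ≠ ⊤ → m s ≤ ρ s := by
    intro s hFs
    have h1 : eLpNorm (Y s) 1 P = ∫⁻ ω, g s ω ∂P := eLpNorm_one_eq_lintegral_enorm
    have h2 : eLpNorm (Y s) 1 P ≤ eLpNorm (Y s) 2 P :=
      eLpNorm_le_eLpNorm_of_exponent_le (by norm_num) (hY_meas s).aestronglyMeasurable
    rw [← hFY s] at h2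
    exact ENNReal.toReal_mono hFs (h1 ▸ h2)
  have hm_int : MeasureTheory.IntegrableOn m (Set.Icc (0:ℝ) T) := by
    refine MeasureTheory.Integrable.mono' hρ_int hm_meas.aestronglyMeasurable.restrict ?_
    filter_upwards [hF_ae] with s hs
    rw [Real.norm_of_nonneg (hm_nonneg s)]
    exact hm_le s hs.ne
  -- the pointwise drift bound
  have hμ_bound : ∀ y x : EuclideanSpace ℝ (Fin d), ‖μ y x‖ ≤ c + L/2 * ‖y‖ + L/2 * ‖x‖ := by
    intro y x
    have h1 := hμ_lip y x 0 0
    simp only [sub_zero] at h1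
    calc ‖μ y x‖ = ‖μ 0 0 + (μ y x - μ 0 0)‖ := by congr 1; abel
      _ ≤ ‖μ 0 0‖ + ‖μ y x - μ 0 0‖ := norm_add_le _ _
      _ ≤ c + (L/2 * ‖y‖ + L/2 * ‖x‖) := by rw [hc]; gcongr
      _ = c + L/2 * ‖y‖ + L/2 * ‖x‖ := by ring
  have hdrift : ∀ s ∈ Set.Icc (0:ℝ) T, F s ≠ ⊤ → ∀ ω : Ω,
      ‖∫ x, μ (X s ω) x ∂(Measure.map (X s) P)‖ ≤ c + L/2 * ‖Y s ω‖ + L/2 * m s := by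
    intro s hs hFs ω
    have hXsm : Measurable (X s) := hX_meas s hs
    haveI : IsProbabilityMeasure (Measure.map (X s) P) :=
      Measure.isProbabilityMeasure_map hXsm.aemeasurable
    have hYXs : Y s = X s := hYX s hs
    have hL2 : MemLp (X s) 2 P := ⟨hXsm.aestronglyMeasurable, by
      rw [← hF_eq s hs]; exact lt_top_iff_ne_top.mpr hFs⟩
    have hL1 : Integrable (X s) P := hL2.integrable (by norm_num)
    have hnormInt : Integrable (fun ω' => ‖X s ω'‖) P := hL1.norm
    have hm_val : m s = ∫ ω', ‖X s ω'‖ ∂P := by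
      rw [integral_norm_eq_lintegral_enorm hXsm.aestronglyMeasurable]
      show (∫⁻ ω', (‖Y s ω'‖₊ : ENNReal) ∂P).toReal = _
      rw [hYXs]; rfl
    have hint_norm : Integrable (fun x => ‖x‖) (Measure.map (X s) P) := by
      rw [integrable_map_measure continuous_norm.aestronglyMeasurable hXsm.aemeasurable]
      exact hnormInt
    set y := X s ω with hy
    have hμy_cont : Continuous (fun x => μ y x) :=
      hμ_cont.comp (continuous_const.prodMk continuous_id)
    have hbound_int : Integrable (fun x : EuclideanSpace ℝ (Fin d) =>
        (c + L/2*‖y‖) + L/2*‖x‖) (Measure.map (X s) P) :=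
      (integrable_const (c + L/2*‖y‖)).add (hint_norm.const_mul (L/2))
    have hYω : Y s ω = y := by rw [hYXs]
    calc ‖∫ x, μ y x ∂(Measure.map (X s) P)‖
        ≤ ∫ x, ((c + L/2*‖y‖) + L/2*‖x‖) ∂(Measure.map (X s) P) := by
          refine norm_integral_le_of_norm_le hbound_int ?_
          refine Filter.Eventually.of_forall fun x => ?_
          calc ‖μ y x‖ ≤ c + L/2*‖y‖ + L/2*‖x‖ := hμ_bound y x
            _ = (c + L/2*‖y‖) + L/2*‖x‖ := by ring
      _ = (c + L/2*‖y‖) + L/2 * ∫ x, ‖x‖ ∂(Measure.map (X s) P) := by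
          rw [integral_add (integrable_const _) (hint_norm.const_mul (L/2)),
            integral_const, integral_const_mul]
          simp
      _ = (c + L/2*‖y‖) + L/2 * m s := by
          have hmm : ∫ x, ‖x‖ ∂(Measure.map (X s) P) = m s := by
            rw [hm_val]
            exact integral_map hXsm.aemeasurable continuous_norm.aestronglyMeasurable
          rw [hmm]
      _ = c + L/2 * ‖Y s ω‖ + L/2 * m s := by rw [hYω]
  -- core estimate at each time
  have key : ∀ t ∈ Set.Icc (0:ℝ) T,
      eLpNorm (X t) 2 P ≤ ENNReal.ofReal (B t + L * ∫ s in (0:ℝ)..t, ρ s) := by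
    intro t ht
    have ht0 : (0:ℝ) ≤ t := ht.1
    have hIoc_sub : Set.Ioc (0:ℝ) t ⊆ Set.Icc (0:ℝ) T :=
      fun u hu => ⟨hu.1.le, hu.2.trans ht.2⟩
    have hIcc_sub : Set.Icc (0:ℝ) t ⊆ Set.Icc (0:ℝ) T := Set.Icc_subset_Icc le_rfl ht.2
    set D : Ω → EuclideanSpace ℝ (Fin d) :=
      fun ω => ∫ s in (0:ℝ)..t, ∫ x, μ (X s ω) x ∂(Measure.map (X s) P) with hDdef
    have hXtD : ∀ᵐ ω ∂P, X t ω = ξ + D ω + W t ω := hX_eq t ht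
    have hm_ii : IntervalIntegrable m MeasureTheory.volume 0 t := by
      apply MeasureTheory.IntegrableOn.intervalIntegrable
      rw [Set.uIcc_of_le ht0]
      exact hm_int.mono_set hIcc_sub
    have hρ_ii : IntervalIntegrable ρ MeasureTheory.volume 0 t := by
      apply MeasureTheory.IntegrableOn.intervalIntegrable
      rw [Set.uIcc_of_le ht0]
      exact hρ_int.mono_set hIcc_sub
    have hYn_ii : ∀ ω, IntervalIntegrable (fun s => ‖Y s ω‖) MeasureTheory.volume 0 t :=
      fun ω => ((hY_cont ω).norm).intervalIntegrable 0 t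
    set YI : Ω → ℝ := fun ω => ∫ s in (0:ℝ)..t, ‖Y s ω‖ with hYI
    have hYI_nonneg : ∀ ω, 0 ≤ YI ω :=
      fun ω => intervalIntegral.integral_nonneg ht0 (fun s _ => norm_nonneg _)
    have hYI_sm : MeasureTheory.StronglyMeasurable YI := by
      have h1 : YI = fun ω => ∫ s, ‖Y s ω‖
          ∂(MeasureTheory.volume.restrict (Set.Ioc (0:ℝ) t)) := by
        funext ω; exact intervalIntegral.integral_of_le ht0
      rw [h1]
      exact MeasureTheory.StronglyMeasurable.integral_prod_right
        (f := fun (ω : Ω) (s : ℝ) => ‖Y s ω‖)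
        (((hYunc.comp measurable_swap).norm).stronglyMeasurable)
    set A : ℝ := c * t + L/2 * ∫ s in (0:ℝ)..t, m s with hA
    have hintm_nonneg : 0 ≤ ∫ s in (0:ℝ)..t, m s :=
      intervalIntegral.integral_nonneg ht0 (fun s _ => hm_nonneg s)
    have hL2' : (0:ℝ) ≤ L/2 := by linarith
    have hA_nonneg : 0 ≤ A :=
      add_nonneg (mul_nonneg hc0 ht0) (mul_nonneg hL2' hintm_nonneg)
    -- pathwise bound on the drift integral
    have hDbound : ∀ ω, ‖D ω‖ ≤ A + L/2 * YI ω := by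
      intro ω
      have hφ_ii : IntervalIntegrable (fun s => c + L/2 * ‖Y s ω‖ + L/2 * m s)
          MeasureTheory.volume 0 t :=
        ((intervalIntegrable_const).add ((hYn_ii ω).const_mul _)).add (hm_ii.const_mul _)
      have hboundae : ∀ᵐ s ∂(MeasureTheory.volume.restrict (Set.uIoc 0 t)),
          ‖∫ x, μ (X s ω) x ∂(Measure.map (X s) P)‖ ≤ c + L/2 * ‖Y s ω‖ + L/2 * m s := by
        rw [Set.uIoc_of_le ht0]
        have h2 : ∀ᵐ s ∂(MeasureTheory.volume.restrict (Set.Ioc (0:ℝ) t)), F s < ⊤ :=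
          ae_restrict_of_ae_restrict_of_subset hIoc_sub hF_ae
        filter_upwards [h2, MeasureTheory.ae_restrict_mem measurableSet_Ioc] with s hsF hsmem
        exact hdrift s (hIoc_sub hsmem) hsF.ne ω
      calc ‖D ω‖ ≤ |∫ s in (0:ℝ)..t, (c + L/2 * ‖Y s ω‖ + L/2 * m s)| :=
            intervalIntegral.norm_integral_le_abs_of_norm_le hboundae hφ_ii
        _ = ∫ s in (0:ℝ)..t, (c + L/2 * ‖Y s ω‖ + L/2 * m s) := by
            refine abs_of_nonneg (intervalIntegral.integral_nonneg ht0 (fun s _ => ?_))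
            have h3 := norm_nonneg (Y s ω)
            have h4 := hm_nonneg s
            nlinarith
        _ = A + L/2 * YI ω := by
            rw [intervalIntegral.integral_add
                (intervalIntegrable_const.add ((hYn_ii ω).const_mul _)) (hm_ii.const_mul _),
              intervalIntegral.integral_add intervalIntegrable_const ((hYn_ii ω).const_mul _),
              intervalIntegral.integral_const,
              intervalIntegral.integral_const_mul, intervalIntegral.integral_const_mul]
            simp only [hA, hYI, smul_eq_mul, sub_zero]
            ring
    -- the L² bound on YI via Cauchy-Schwarz/Minkowski
    have hYIbound : eLpNorm YI 2 P ≤ ENNReal.ofReal (∫ s in (0:ℝ)..t, ρ s) := by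
      have hFioc_fin : ∫⁻ s in Set.Ioc (0:ℝ) t, F s ≠ ⊤ := by
        refine ne_of_lt (lt_of_le_of_lt ?_ hF_lt)
        exact lintegral_mono' (MeasureTheory.Measure.restrict_mono hIoc_sub le_rfl) le_rfl
      have hae_ioc : ∀ᵐ s ∂(MeasureTheory.volume.restrict (Set.Ioc (0:ℝ) t)), F s < ⊤ :=
        ae_restrict_of_ae_restrict_of_subset hIoc_sub hF_ae
      have hofReal : ENNReal.ofReal (∫ s in (0:ℝ)..t, ρ s)
          = ∫⁻ s in Set.Ioc (0:ℝ) t, F s := by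
        rw [intervalIntegral.integral_of_le ht0]
        have h5 := MeasureTheory.integral_toReal (hF_meas.aemeasurable.restrict
          (s := Set.Ioc (0:ℝ) t)) hae_ioc
        rw [show (∫ s in Set.Ioc (0:ℝ) t, ρ s) = ∫ s in Set.Ioc (0:ℝ) t, (F s).toReal from rfl,
          h5, ENNReal.ofReal_toReal hFioc_fin]
      rw [hofReal]
      rw [MeasureTheory.eLpNorm_eq_lintegral_rpow_enorm_toReal (by norm_num) (by norm_num),
        show ((2:ENNReal).toReal = (2:ℝ)) by norm_num]
      simp only [enorm_eq_nnnorm]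
      have h1 : ∀ ω, (‖YI ω‖₊ : ENNReal) = ∫⁻ s in Set.Ioc (0:ℝ) t, g s ω := by
        intro ω
        rw [← enorm_eq_nnnorm, ← ofReal_norm, Real.norm_of_nonneg (hYI_nonneg ω)]
        have h2 : YI ω = ∫ s in Set.Ioc (0:ℝ) t, ‖Y s ω‖ :=
          intervalIntegral.integral_of_le ht0
        rw [h2, MeasureTheory.ofReal_integral_eq_lintegral_ofReal
          ((intervalIntegrable_iff_integrableOn_Ioc_of_le ht0).mp (hYn_ii ω))
          (Filter.Eventually.of_forall (fun s => norm_nonneg _))]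
        exact lintegral_congr fun s => ofReal_norm _
      simp_rw [h1]
      have h3 := aux_lintegral_sq_lintegral_le
        (MeasureTheory.volume.restrict (Set.Ioc (0:ℝ) t)) P hg_meas
      calc (∫⁻ ω, (∫⁻ s in Set.Ioc (0:ℝ) t, g s ω) ^ (2:ℝ) ∂P) ^ (1/(2:ℝ))
          ≤ (((∫⁻ s in Set.Ioc (0:ℝ) t, F s)) ^ (2:ℝ)) ^ (1/(2:ℝ)) := by
            refine ENNReal.rpow_le_rpow ?_ (by norm_num)
            exact h3
        _ = ∫⁻ s in Set.Ioc (0:ℝ) t, F s := by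
            rw [← ENNReal.rpow_mul]; norm_num
    -- measurability
    have hWm : Measurable (W t) := hW.1 t ht
    have hD_meas : MeasureTheory.AEStronglyMeasurable D P := by
      have h1 : Measurable (fun ω => X t ω - ξ - W t ω) :=
        ((hX_meas t ht).sub measurable_const).sub hWm
      refine h1.aestronglyMeasurable.congr ?_
      filter_upwards [hXtD] with ω hω
      rw [hω]; abel
    have hZ_aesm : MeasureTheory.AEStronglyMeasurable (fun ω => A + L/2 * YI ω) P :=
      (measurable_const.add (hYI_sm.measurable.const_mul (L/2))).aestronglyMeasurable
    have hξnorm : eLpNorm (fun _ : Ω => ξ) 2 P = ENNReal.ofReal ‖ξ‖ := by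
      rw [MeasureTheory.eLpNorm_const ξ (by norm_num)
        (MeasureTheory.IsProbabilityMeasure.ne_zero P)]
      simp [ofReal_norm]
    have hZbound : eLpNorm (fun ω => A + L/2 * YI ω) 2 P
        ≤ ENNReal.ofReal A + ENNReal.ofReal (L/2) * eLpNorm YI 2 P := by
      have h6 : eLpNorm (fun ω => A + L/2 * YI ω) 2 P
          ≤ eLpNorm (fun _ : Ω => A) 2 P + eLpNorm (fun ω => L/2 * YI ω) 2 P :=
        MeasureTheory.eLpNorm_add_le aestronglyMeasurable_const
          ((hYI_sm.measurable.const_mul (L/2)).aestronglyMeasurable) one_le_two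
      have h7 : eLpNorm (fun _ : Ω => A) 2 P = ENNReal.ofReal A := by
        rw [MeasureTheory.eLpNorm_const A (by norm_num)
          (MeasureTheory.IsProbabilityMeasure.ne_zero P)]
        simp [Real.enorm_eq_ofReal hA_nonneg]
      have h8 : eLpNorm (fun ω => L/2 * YI ω) 2 P = ENNReal.ofReal (L/2) * eLpNorm YI 2 P := by
        rw [show (fun ω => L/2 * YI ω) = (L/2) • YI from rfl,
          MeasureTheory.eLpNorm_const_smul]
        congr 1
        rw [Real.enorm_eq_ofReal hL2']
      rw [h7, h8] at h6
      exact h6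
    -- comparison of ∫ m with ∫ ρ
    have hint_m_le : ∫ s in (0:ℝ)..t, m s ≤ ∫ s in (0:ℝ)..t, ρ s := by
      refine intervalIntegral.integral_mono_ae_restrict ht0 hm_ii hρ_ii ?_
      have h9 : ∀ᵐ s ∂(MeasureTheory.volume.restrict (Set.Icc (0:ℝ) t)), F s < ⊤ :=
        ae_restrict_of_ae_restrict_of_subset hIcc_sub hF_ae
      filter_upwards [h9] with s hsF
      exact hm_le s hsF.ne
    have hIρ_nonneg : 0 ≤ ∫ s in (0:ℝ)..t, ρ s :=
      intervalIntegral.integral_nonneg ht0 (fun s _ => hρ_nonneg s)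
    -- assemble
    have hsqrt : eLpNorm (W t) 2 P = ENNReal.ofReal (Real.sqrt (t * d)) :=
      aux_bm_eLpNorm hW ht
    calc eLpNorm (X t) 2 P
        = eLpNorm (fun ω => ξ + (D ω + W t ω)) 2 P := by
          apply eLpNorm_congr_ae
          filter_upwards [hXtD] with ω hω
          rw [hω, add_assoc]
      _ ≤ eLpNorm (fun _ : Ω => ξ) 2 P + eLpNorm (fun ω => D ω + W t ω) 2 P := by
          exact MeasureTheory.eLpNorm_add_le aestronglyMeasurable_const
            (hD_meas.add hWm.aestronglyMeasurable) one_le_two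
      _ ≤ eLpNorm (fun _ : Ω => ξ) 2 P + (eLpNorm D 2 P + eLpNorm (W t) 2 P) := by
          gcongr
          exact MeasureTheory.eLpNorm_add_le hD_meas hWm.aestronglyMeasurable one_le_two
      _ ≤ ENNReal.ofReal ‖ξ‖ + ((ENNReal.ofReal A
            + ENNReal.ofReal (L/2) * ENNReal.ofReal (∫ s in (0:ℝ)..t, ρ s))
            + ENNReal.ofReal (Real.sqrt (t * d))) := by
          rw [hξnorm, hsqrt]
          gcongr
          calc eLpNorm D 2 P ≤ eLpNorm (fun ω => A + L/2 * YI ω) 2 P := by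
                refine MeasureTheory.eLpNorm_mono (fun ω => ?_)
                refine (hDbound ω).trans ?_
                exact le_abs_self _
            _ ≤ ENNReal.ofReal A + ENNReal.ofReal (L/2) * eLpNorm YI 2 P := hZbound
            _ ≤ ENNReal.ofReal A
                + ENNReal.ofReal (L/2) * ENNReal.ofReal (∫ s in (0:ℝ)..t, ρ s) := by
                gcongr
      _ = ENNReal.ofReal (‖ξ‖ + ((A + L/2 * ∫ s in (0:ℝ)..t, ρ s) + Real.sqrt (t * d))) := by
          rw [← ENNReal.ofReal_mul hL2', ← ENNReal.ofReal_add hA_nonneg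
              (mul_nonneg hL2' hIρ_nonneg),
            ← ENNReal.ofReal_add (add_nonneg hA_nonneg (mul_nonneg hL2' hIρ_nonneg))
              (Real.sqrt_nonneg _),
            ← ENNReal.ofReal_add (norm_nonneg _)]
          positivity
      _ ≤ ENNReal.ofReal (B t + L * ∫ s in (0:ℝ)..t, ρ s) := by
          refine ENNReal.ofReal_le_ofReal ?_
          have h10 : A ≤ c * t + L/2 * ∫ s in (0:ℝ)..t, ρ s := by
            rw [hA]; gcongr
          show ‖ξ‖ + ((A + L/2 * ∫ s in (0:ℝ)..t, ρ s) + Real.sqrt (t * d))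
            ≤ (‖ξ‖ + c * t + Real.sqrt (t * d)) + L * ∫ s in (0:ℝ)..t, ρ s
          linarith
  -- properties of B
  have hB_cont : Continuous B := by
    apply (continuous_const.add (continuous_const.mul continuous_id)).add
    exact Real.continuous_sqrt.comp (continuous_id.mul continuous_const)
  have hB_nonneg : ∀ t, 0 ≤ t → 0 ≤ B t := by
    intro t ht
    have h1 : 0 ≤ Real.sqrt (t * d) := Real.sqrt_nonneg _
    have h2 : 0 ≤ c * t := mul_nonneg hc0 ht
    have h3 : 0 ≤ ‖ξ‖ := norm_nonneg _
    show 0 ≤ ‖ξ‖ + c * t + Real.sqrt (t * d)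
    linarith
  have hB_mono : ∀ ⦃s t : ℝ⦄, 0 ≤ s → s ≤ t → B s ≤ B t := by
    intro s t hs hst
    have h1 : c * s ≤ c * t := mul_le_mul_of_nonneg_left hst hc0
    have h2 : Real.sqrt (s * d) ≤ Real.sqrt (t * d) :=
      Real.sqrt_le_sqrt (mul_le_mul_of_nonneg_right hst (Nat.cast_nonneg d))
    show ‖ξ‖ + c * s + Real.sqrt (s * d) ≤ ‖ξ‖ + c * t + Real.sqrt (t * d)
    linarith
  -- Grönwall
  have hρ_ineq : ∀ t ∈ Set.Icc (0:ℝ) T, ρ t ≤ B t + L * ∫ s in (0:ℝ)..t, ρ s := by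
    intro t ht
    have h1 := key t ht
    rw [← hF_eq t ht] at h1
    refine ENNReal.toReal_le_of_le_ofReal ?_ h1
    have h2 : 0 ≤ ∫ s in (0:ℝ)..t, ρ s :=
      intervalIntegral.integral_nonneg ht.1 (fun s _ => hρ_nonneg s)
    have := hB_nonneg t ht.1
    positivity
  have hgron := aux_gronwall T L hL B ρ hB_cont hB_nonneg hB_mono hρ_nonneg hρ_int hρ_ineq
  intro t ht
  calc eLpNorm (X t) 2 P ≤ ENNReal.ofReal (B t + L * ∫ s in (0:ℝ)..t, ρ s) := key t ht
    _ ≤ ENNReal.ofReal (B t * Real.exp (L * t)) := ENNReal.ofReal_le_ofReal (hgron t ht)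
end

section
/- Let d ∈ ℕ, 𝔳, 𝔣 ∈ {0,1}, and let C_{n,m} ∈ ℕ₀, indexed by n ∈ ℕ₀ and m ∈ ℕ, satisfy for all m, n ∈ ℕ that C_{0,m} = 0 and C_{n,m} ≤ 𝔳 mⁿ d + 𝔣 + Σ_{ℓ=1}^{n−1} [ m^{n−ℓ} ( 𝔳 (m^ℓ d + 1) + 2𝔣 + 2 C_{ℓ,m} + 2 C_{ℓ−1,m} ) ]. Then for all n, m ∈ ℕ it holds that C_{n,m} ≤ (𝔳 d + 𝔣) (4m)ⁿ. -/
/-- The computational cost of the multilevel Picard approximations satisfies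
`C_{n,m} ≤ (𝔳 d + 𝔣) (4 m)ⁿ`. -/
theorem mlp_cost_bound (d : ℕ) (hd : 1 ≤ d) (v f : ℕ)
    (hv : v ∈ ({0, 1} : Set ℕ)) (hf : f ∈ ({0, 1} : Set ℕ))
    (C : ℕ → ℕ → ℕ)
    (hC0 : ∀ m : ℕ, 1 ≤ m → C 0 m = 0)
    (hCrec : ∀ m : ℕ, 1 ≤ m → ∀ n : ℕ, 1 ≤ n →
      C n m ≤ v * m ^ n * d + f +
        ∑ ℓ ∈ Finset.Ico 1 n,
          m ^ (n - ℓ) * (v * (m ^ ℓ * d + 1) + 2 * f + 2 * C ℓ m + 2 * C (ℓ - 1) m)) :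
    ∀ n : ℕ, 1 ≤ n → ∀ m : ℕ, 1 ≤ m → C n m ≤ (v * d + f) * (4 * m) ^ n := by
  have hvK : v ≤ v * d + f := by nlinarith
  have hdK : v * d ≤ v * d + f := Nat.le_add_right _ _
  have hfK : f ≤ v * d + f := Nat.le_add_left _ _
  have aux : ∀ n : ℕ, 1 ≤ n →
      2 + ∑ ℓ ∈ Finset.Ico 1 n, (4 + 2 * 4 ^ ℓ + 2 * 4 ^ (ℓ - 1)) ≤ 4 ^ n := by
    intro n hn
    rcases Nat.lt_or_ge n 2 with h2 | h2
    · interval_cases n <;> simp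
    · induction n, h2 using Nat.le_induction with
      | base => decide
      | succ k hk ih =>
        rw [Finset.sum_Ico_succ_top (by omega : 1 ≤ k)]
        have e1 : 4 ^ k = 4 * 4 ^ (k - 1) := by
          conv_lhs => rw [show k = (k - 1) + 1 by omega]
          ring
        have e2 : 4 ^ (k + 1) = 16 * 4 ^ (k - 1) := by
          conv_lhs => rw [show k + 1 = (k - 1) + 2 by omega]
          ring
        have hA : 4 ≤ 4 ^ (k - 1) := by
          calc 4 = 4 ^ 1 := by norm_num
          _ ≤ 4 ^ (k - 1) := Nat.pow_le_pow_right (by norm_num) (by omega)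
        have ih' := ih (by omega)
        omega
  intro n
  induction n using Nat.strong_induction_on with
  | _ n ih =>
    intro hn m hm
    have hmn : 1 ≤ m ^ n := Nat.one_le_pow _ _ hm
    have key : ∀ ℓ ∈ Finset.Ico 1 n,
        m ^ (n - ℓ) * (v * (m ^ ℓ * d + 1) + 2 * f + 2 * C ℓ m + 2 * C (ℓ - 1) m)
          ≤ (v * d + f) * m ^ n * (4 + 2 * 4 ^ ℓ + 2 * 4 ^ (ℓ - 1)) := by
      intro ℓ hℓ
      rw [Finset.mem_Ico] at hℓ
      have hC1 : C ℓ m ≤ (v * d + f) * (4 * m) ^ ℓ := ih ℓ hℓ.2 hℓ.1 m hm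
      have hC2 : C (ℓ - 1) m ≤ (v * d + f) * (4 * m) ^ (ℓ - 1) := by
        rcases Nat.eq_or_lt_of_le hℓ.1 with h | h
        · rw [← h]; simp [hC0 m hm]
        · exact ih (ℓ - 1) (by omega) (by omega) m hm
      obtain ⟨a, rfl⟩ : ∃ a, ℓ = a + 1 := ⟨ℓ - 1, by omega⟩
      simp only [Nat.add_sub_cancel] at hC2 ⊢
      obtain ⟨c, rfl⟩ : ∃ c, n = (a + 1) + c := ⟨n - (a + 1), by omega⟩
      simp only [Nat.add_sub_cancel_left]
      calc m ^ c * (v * (m ^ (a + 1) * d + 1) + 2 * f + 2 * C (a + 1) m + 2 * C a m)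
          ≤ m ^ c * ((v * d + f) * m ^ (a + 1) + 3 * (v * d + f)
              + 2 * ((v * d + f) * (4 * m) ^ (a + 1)) + 2 * ((v * d + f) * (4 * m) ^ a)) := by
            apply Nat.mul_le_mul_left
            have h1 : v * d * m ^ (a + 1) ≤ (v * d + f) * m ^ (a + 1) :=
              Nat.mul_le_mul_right _ hdK
            nlinarith
        _ ≤ (v * d + f) * m ^ ((a + 1) + c) * (4 + 2 * 4 ^ (a + 1) + 2 * 4 ^ a) := by
            simp only [pow_add, pow_succ, mul_pow]
            have k1 : (v * d + f) * m ^ c ≤ (v * d + f) * (m ^ a * m * m ^ c) := by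
              have : 1 * m ^ c ≤ (m ^ a * m) * m ^ c := by
                apply Nat.mul_le_mul_right
                exact Nat.one_le_iff_ne_zero.mpr (by positivity)
              calc (v * d + f) * m ^ c = (v * d + f) * (1 * m ^ c) := by ring
                _ ≤ (v * d + f) * ((m ^ a * m) * m ^ c) := Nat.mul_le_mul_left _ this
                _ = (v * d + f) * (m ^ a * m * m ^ c) := by ring
            have k2 : (v * d + f) * (4 ^ a * (m ^ a * m ^ c))
                ≤ (v * d + f) * (4 ^ a * (m ^ a * m * m ^ c)) := by
              apply Nat.mul_le_mul_left
              apply Nat.mul_le_mul_left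
              have : m ^ a * 1 * m ^ c ≤ m ^ a * m * m ^ c := by
                apply Nat.mul_le_mul_right
                exact Nat.mul_le_mul_left _ hm
              simpa using this
            nlinarith [k1, k2]
    calc C n m ≤ v * m ^ n * d + f +
          ∑ ℓ ∈ Finset.Ico 1 n,
            m ^ (n - ℓ) * (v * (m ^ ℓ * d + 1) + 2 * f + 2 * C ℓ m + 2 * C (ℓ - 1) m) :=
        hCrec m hm n hn
      _ ≤ (v * d + f) * m ^ n + (v * d + f) * m ^ n +
          ∑ ℓ ∈ Finset.Ico 1 n, (v * d + f) * m ^ n * (4 + 2 * 4 ^ ℓ + 2 * 4 ^ (ℓ - 1)) := by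
          refine add_le_add (add_le_add ?_ ?_) (Finset.sum_le_sum key)
          · calc v * m ^ n * d = v * d * m ^ n := by ring
              _ ≤ (v * d + f) * m ^ n := Nat.mul_le_mul_right _ hdK
          · calc f = f * 1 := by ring
              _ ≤ (v * d + f) * m ^ n := Nat.mul_le_mul hfK hmn
      _ = (v * d + f) * m ^ n *
          (2 + ∑ ℓ ∈ Finset.Ico 1 n, (4 + 2 * 4 ^ ℓ + 2 * 4 ^ (ℓ - 1))) := by
          rw [← Finset.mul_sum]; ring
      _ ≤ (v * d + f) * m ^ n * 4 ^ n := Nat.mul_le_mul_left _ (aux n hn)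
      _ = (v * d + f) * (4 * m) ^ n := by rw [mul_pow]; ring
end
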